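/- arXiv:2005.07556 — 6 statements merged into one kernel-verified Lean document; each statement's English description precedes it below -/
import Mathlib

section
/- If X = (X₁,…,X_d) is a strict row contraction of n×n complex matrices, then the spectral radius of T = Σᵢ₌₁^d conj(Xᵢ) ⊗ Xᵢ ∈ M_{n²}(ℂ) is strictly less than 1; in particular I_{n²} − Σᵢ₌₁^d conj(Xᵢ) ⊗ Xᵢ is invertible. -/
/-!
Common definitions: the ψ-involution, `vec`, the elementary Pick matrix, the Choi matrix,
Kronecker-product helpers with right-associated index types, the boomerang matrices, the
commutation matrix, and the Moore–Penrose predicate.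
-/

open Matrix Filter
open scoped Kronecker Matrix.Norms.L2Operator ComplexOrder

noncomputable section

/-- Square `n × n` complex matrices. -/
abbrev Mat (n : ℕ) := Matrix (Fin n) (Fin n) ℂ

/-- Entrywise complex conjugate of a matrix. -/
def conjM {m k : Type*} (A : Matrix m k ℂ) : Matrix m k ℂ := A.map (starRingEnd ℂ)

/-- `vec A` stacks the columns of `A`: the slot `(j, i)` (column `j`, row `i`) holds `A i j`. -/
def vecM (n : ℕ) (A : Mat n) : Matrix (Fin n × Fin n) Unit ℂ := Matrix.of fun p _ => A p.2 p.1

/-- The `ψ`-involution on `M_{n²}(ℂ)`: the linear map determined on matrix units by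
`ψ(E_{ij} ⊗ E_{kℓ}) = E_{ℓj} ⊗ E_{ki}`, equivalently `ψ(A ⊗ B) = vec(B)·vec(A)ᵀ`. -/
def psi (n : ℕ) (U : Matrix (Fin n × Fin n) (Fin n × Fin n) ℂ) :
    Matrix (Fin n × Fin n) (Fin n × Fin n) ℂ :=
  Matrix.of fun p q => U (q.2, p.2) (q.1, p.1)

/-- `X` is a strict row contraction: `‖Σᵢ Xᵢ Xᵢ*‖ < 1` in the L² operator norm. -/
def StrictRowContraction {n : ℕ} {ι : Type*} [Fintype ι] (X : ι → Mat n) : Prop :=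
  ‖∑ i, X i * (X i)ᴴ‖ < 1

/-- The elementary Pick matrix `P_X = ψ((I_{n²} − Σᵢ conj(Xᵢ) ⊗ Xᵢ)⁻¹)`. -/
def pick {n : ℕ} {ι : Type*} [Fintype ι] (X : ι → Mat n) :
    Matrix (Fin n × Fin n) (Fin n × Fin n) ℂ :=
  psi n ((1 - ∑ i, conjM (X i) ⊗ₖ X i)⁻¹)

/-- The Choi matrix `𝔠_n = Σ_{i,j} E_{ij} ⊗ E_{ij} ∈ M_{n²}(ℂ)`. -/
def choiM (n : ℕ) : Matrix (Fin n × Fin n) (Fin n × Fin n) ℂ :=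
  ∑ i : Fin n, ∑ j : Fin n, single i j (1 : ℂ) ⊗ₖ single i j (1 : ℂ)

/-- `X^w = X_{i₁} ⋯ X_{i_k}` for a word `w = i₁⋯i_k` in the free monoid. -/
def wordProd {n : ℕ} {ι : Type*} (X : ι → Mat n) (w : List ι) : Mat n := (w.map X).prod

/-- Kronecker product `A ⊗ C` where `A` carries a product index, with the resulting
index types flattened right-associatively (`(a × b) × c ↦ a × (b × c)`). -/
def krA {a b c a' b' c' : Type*} (A : Matrix (a × b) (a' × b') ℂ) (C : Matrix c c' ℂ) :
    Matrix (a × b × c) (a' × b' × c') ℂ :=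
  Matrix.of fun p q => A (p.1, p.2.1) (q.1, q.2.1) * C p.2.2 q.2.2

/-- Kronecker product `M ⊗ C` where `M` carries a triple product index, flattened
right-associatively. -/
def krT {a b c e a' b' c' e' : Type*} (M : Matrix (a × b × c) (a' × b' × c') ℂ)
    (C : Matrix e e' ℂ) : Matrix (a × b × c × e) (a' × b' × c' × e') ℂ :=
  Matrix.of fun p q => M (p.1, p.2.1, p.2.2.1) (q.1, q.2.1, q.2.2.1) * C p.2.2.2 q.2.2.2

/-- Triple Kronecker product `A ⊗ B ⊗ C` with right-associated index types. -/
def kr3 {a b c a' b' c' : Type*} (A : Matrix a a' ℂ) (B : Matrix b b' ℂ) (C : Matrix c c' ℂ) :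
    Matrix (a × b × c) (a' × b' × c') ℂ :=
  Matrix.of fun p q => A p.1 q.1 * B p.2.1 q.2.1 * C p.2.2 q.2.2

/-- The boomerang matrix `B̆ = Σ_{i,j} e_i ⊗ e_j ⊗ E_{ij} ∈ M_{n³×n}(ℂ)`:
its entry at row `(i, j, k)`, column `ℓ` is `δ_{k i} δ_{ℓ j}`. -/
def boom (n : ℕ) : Matrix (Fin n × Fin n × Fin n) (Fin n) ℂ :=
  Matrix.of fun p l => if p.2.2 = p.1 ∧ l = p.2.1 then 1 else 0

/-- The commutation (permutation) matrix `Q_{n,r}`, satisfying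
`Q_{n,r} (U ⊗ V) Q_{n,r}ᵀ = V ⊗ U` for `U ∈ M_n`, `V ∈ M_r`. -/
def commMat (n r : ℕ) : Matrix (Fin r × Fin n) (Fin n × Fin r) ℂ :=
  Matrix.of fun p q => if p.2 = q.1 ∧ p.1 = q.2 then 1 else 0

/-- `Σ_{i,j} e_i ⊗ e_j ⊗ I_r ⊗ E_{ij}`: its entry at row `(i, j, a, k)`, column `(b, ℓ)`
is `δ_{k i} δ_{ℓ j} δ_{a b}`. -/
def preBoom (n r : ℕ) : Matrix (Fin n × Fin n × Fin r × Fin n) (Fin r × Fin n) ℂ :=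
  Matrix.of fun p q => if p.2.2.2 = p.1 ∧ q.2 = p.2.1 ∧ p.2.2.1 = q.1 then 1 else 0

/-- The ampliated boomerang matrix `B̆_r = (Σ_{i,j} e_i ⊗ e_j ⊗ I_r ⊗ E_{ij}) · Q_{n,r}`. -/
def boomAmp (n r : ℕ) : Matrix (Fin n × Fin n × Fin r × Fin n) (Fin n × Fin r) ℂ :=
  preBoom n r * commMat n r

/-- `B` is the Moore–Penrose pseudoinverse of `A` (the four Penrose conditions). -/
structure IsMoorePenroseInv {m k : Type*} [Fintype m] [Fintype k]
    (A : Matrix m k ℂ) (B : Matrix k m ℂ) : Prop where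
  mul_inv_mul : A * B * A = A
  inv_mul_inv : B * A * B = B
  hermitian_mul_inv : (A * B)ᴴ = A * B
  hermitian_inv_mul : (B * A)ᴴ = B * A


/-!
An eigenvector of `T = Σᵢ conj(Xᵢ) ⊗ Xᵢ` with eigenvalue `μ` is `vec V` for a nonzero matrix `V`
with `Σᵢ Xᵢ V Xᵢ* = μ V`. With the block row `R = [X₁ ⋯ X_d]` the left side is `R (I ⊗ V) R*`,
and `V ↦ I ⊗ V` is a *-homomorphism of C*-algebras, hence contractive. So
`|μ| ‖V‖ ≤ ‖R‖² ‖V‖ = ‖Σᵢ Xᵢ Xᵢ*‖ ‖V‖`, and every eigenvalue of `T` has modulus at most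
`‖Σᵢ Xᵢ Xᵢ*‖ < 1`.
-/

namespace Matrix

variable {ι m n : Type*} [Fintype ι] [Fintype n]

theorem sum_conjM_kronecker_mulVec_vec (X : ι → Matrix n n ℂ) (V : Matrix n n ℂ) :
    (∑ i, conjM (X i) ⊗ₖ X i) *ᵥ vec V = vec (∑ i, X i * V * (X i)ᴴ) := by
  simp only [sum_mulVec, vec_sum, kronecker_mulVec_vec]
  rfl

variable [DecidableEq ι]

def oneKroneckerStarAlgHom [DecidableEq n] : Matrix n n ℂ →⋆ₐ[ℂ] Matrix (ι × n) (ι × n) ℂ where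
  toFun V := 1 ⊗ₖ V
  map_one' := one_kronecker_one
  map_mul' V W := by rw [← mul_kronecker_mul, Matrix.one_mul]
  map_zero' := kronecker_zero _
  map_add' := kronecker_add _
  commutes' c := by simp only [Algebra.algebraMap_eq_smul_one, kronecker_smul, one_kronecker_one]
  map_star' V := by simp only [star_eq_conjTranspose, conjTranspose_kronecker, conjTranspose_one]

theorem norm_one_kronecker_le [DecidableEq n] (V : Matrix n n ℂ) :
    ‖(1 : Matrix ι ι ℂ) ⊗ₖ V‖ ≤ ‖V‖ :=
  NonUnitalStarAlgHom.norm_apply_le (oneKroneckerStarAlgHom (ι := ι)) V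

def blockRow {α : Type*} (X : ι → Matrix m n α) : Matrix m (ι × n) α := of fun a p => X p.1 a p.2

theorem blockRow_mul_one_kronecker_mul_conjTranspose {α : Type*} [Semiring α] [StarRing α]
    (X : ι → Matrix m n α) (V : Matrix n n α) :
    blockRow X * ((1 : Matrix ι ι α) ⊗ₖ V) * (blockRow X)ᴴ = ∑ i, X i * V * (X i)ᴴ := by
  ext a b
  simp [blockRow, mul_apply, Fintype.sum_prod_type, one_apply, sum_apply, ite_mul]

theorem norm_sum_mul_mul_conjTranspose_le [Fintype m] [DecidableEq m] [DecidableEq n]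
    (X : ι → Matrix m n ℂ) (V : Matrix n n ℂ) :
    ‖∑ i, X i * V * (X i)ᴴ‖ ≤ ‖∑ i, X i * (X i)ᴴ‖ * ‖V‖ := by
  set R := blockRow X
  have hRR : ‖∑ i, X i * (X i)ᴴ‖ = ‖R‖ * ‖R‖ := by
    have h := blockRow_mul_one_kronecker_mul_conjTranspose X 1
    simp only [one_kronecker_one, Matrix.mul_one] at h
    rw [← h, ← l2_opNorm_conjTranspose R, ← l2_opNorm_conjTranspose_mul_self Rᴴ,
      conjTranspose_conjTranspose]
  calc ‖∑ i, X i * V * (X i)ᴴ‖ = ‖R * ((1 : Matrix ι ι ℂ) ⊗ₖ V) * Rᴴ‖ := by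
        rw [blockRow_mul_one_kronecker_mul_conjTranspose]
    _ ≤ ‖R‖ * ‖(1 : Matrix ι ι ℂ) ⊗ₖ V‖ * ‖Rᴴ‖ :=
        (l2_opNorm_mul _ _).trans (mul_le_mul_of_nonneg_right (l2_opNorm_mul _ _) (norm_nonneg _))
    _ ≤ ‖R‖ * ‖V‖ * ‖R‖ := by
        rw [l2_opNorm_conjTranspose]
        gcongr
        exact norm_one_kronecker_le V
    _ = ‖∑ i, X i * (X i)ᴴ‖ * ‖V‖ := by rw [hRR]; ring

theorem norm_le_of_mem_spectrum_sum_conjM_kronecker [DecidableEq n] (X : ι → Matrix n n ℂ)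
    {μ : ℂ} (hμ : μ ∈ spectrum ℂ (∑ i, conjM (X i) ⊗ₖ X i)) : ‖μ‖ ≤ ‖∑ i, X i * (X i)ᴴ‖ := by
  rw [← spectrum_toLin', ← Module.End.hasEigenvalue_iff_mem_spectrum] at hμ
  obtain ⟨v, hv⟩ := hμ.exists_hasEigenvector
  obtain ⟨V, rfl⟩ := vec_bijective.surjective v
  have hV : V ≠ 0 := by simpa using hv.2
  have hΦ : ∑ i, X i * V * (X i)ᴴ = μ • V := by
    rw [← vec_inj, vec_smul, ← sum_conjM_kronecker_mulVec_vec, ← toLin'_apply]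
    exact hv.apply_eq_smul
  refine le_of_mul_le_mul_right ?_ (norm_pos_iff.2 hV)
  rw [← norm_smul, ← hΦ]
  exact norm_sum_mul_mul_conjTranspose_le X V

end Matrix

/-- If `X = (X₁,…,X_d)` is a strict row contraction of `n×n` complex
matrices, then the spectral radius of `T = Σᵢ conj(Xᵢ) ⊗ Xᵢ` is strictly less than `1`;
in particular `I_{n²} − Σᵢ conj(Xᵢ) ⊗ Xᵢ` is invertible. -/
theorem spectralRadius_lt_one_of_strictRowContraction {n d : ℕ} (X : Fin d → Mat n)
    (hX : StrictRowContraction X) :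
    spectralRadius ℂ (∑ i, conjM (X i) ⊗ₖ X i) < 1 ∧
      IsUnit ((1 : Matrix (Fin n × Fin n) (Fin n × Fin n) ℂ) - ∑ i, conjM (X i) ⊗ₖ X i) := by
  have hρ : spectralRadius ℂ (∑ i, conjM (X i) ⊗ₖ X i) < 1 := by
    refine lt_of_le_of_lt (b := (‖∑ i, X i * (X i)ᴴ‖₊ : ENNReal)) (iSup₂_le fun μ hμ => ?_) ?_
    · exact_mod_cast norm_le_of_mem_spectrum_sum_conjM_kronecker X hμ
    · exact_mod_cast hX
  have hresolvent : (1 : ℂ) ∈ resolventSet ℂ (∑ i, conjM (X i) ⊗ₖ X i) :=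
    spectrum.mem_resolventSet_of_spectralRadius_lt (by simpa using hρ)
  exact ⟨hρ, by simpa using spectrum.mem_resolventSet_iff.1 hresolvent⟩
end
end

section
/- Let X = (X₁,…,X_d) be a strict row contraction of n×n complex matrices. Then the family indexed by words w in the free monoid on {1,…,d} given by w ↦ (I_n ⊗ X^w)·𝔠_n·(I_n ⊗ X^w)* is summable in M_{n²}(ℂ), and Σ_w (I_n ⊗ X^w)·𝔠_n·(I_n ⊗ X^w)* = P_X. -/
/-!
Common definitions: the ψ-involution, `vec`, the elementary Pick matrix, the Choi matrix,
Kronecker-product helpers with right-associated index types, the boomerang matrices, the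
commutation matrix, and the Moore–Penrose predicate.
-/

open Matrix Filter
open scoped Kronecker Matrix.Norms.L2Operator ComplexOrder

noncomputable section

/-!
The map `w ↦ conj(X^w) ⊗ X^w` is multiplicative and `(I ⊗ A) 𝔠 (I ⊗ A)* = ψ(conj A ⊗ A)`, so
the series is `ψ` applied to `Σ_w conj(X^w) ⊗ X^w`, whose words of length `k` contribute `S^k`
with `S = Σᵢ conj(Xᵢ) ⊗ Xᵢ`; once the series converges, its sum inverts `1 - S`.
Convergence is entrywise: `|(X^w)_{ab}| ≤ ‖(X^w)* e_a‖`, and peeling off the first letter gives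
`Σ_{|w|=k} ‖(X^w)* v‖² ≤ ‖Σᵢ XᵢXᵢ*‖^k ‖v‖²`, a convergent geometric bound.
-/

namespace List

variable {ι : Type*}

theorem sum_ofFn_succ [Fintype ι] {β : Type*} [AddCommMonoid β] (f : List ι → β) (k : ℕ) :
    ∑ g : Fin (k + 1) → ι, f (ofFn g) = ∑ i, ∑ g : Fin k → ι, f (i :: ofFn g) := by
  rw [← (Fin.consEquiv fun _ => ι).sum_comp, Fintype.sum_prod_type]
  simp [Fin.consEquiv, ofFn_succ]

theorem sum_prod_map_ofFn_eq_pow [Fintype ι] {R : Type*} [Semiring R] (Y : ι → R) (k : ℕ) :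
    ∑ g : Fin k → ι, ((ofFn g).map Y).prod = (∑ i, Y i) ^ k := by
  induction k with
  | zero => simp
  | succ k ih =>
    rw [sum_ofFn_succ fun w => (w.map Y).prod]
    simp only [map_cons, prod_cons, ← Finset.mul_sum, ih, ← Finset.sum_mul, pow_succ']

theorem summable_of_sum_ofFn_le [Fintype ι] {f : List ι → ℝ} (hf : 0 ≤ f) {b : ℕ → ℝ}
    (hb : Summable b) (h : ∀ k, ∑ g : Fin k → ι, f (ofFn g) ≤ b k) : Summable f := by
  rw [← equivSigmaTuple.symm.summable_iff]
  refine (summable_sigma_of_nonneg fun _ => hf _).2 ⟨fun k => ?_, ?_⟩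
  · exact Summable.of_finite
  · refine hb.of_nonneg_of_le (fun _ => tsum_nonneg fun _ => hf _) fun k => ?_
    simpa [tsum_fintype] using h k

theorem _root_.HasSum.sum_ofFn [Fintype ι] {α : Type*} [AddCommMonoid α] [TopologicalSpace α]
    [ContinuousAdd α] [RegularSpace α] {f : List ι → α} {a : α} (h : HasSum f a) :
    HasSum (fun k => ∑ g : Fin k → ι, f (ofFn g)) a :=
  (equivSigmaTuple.symm.hasSum_iff.2 h).sigma fun _ => hasSum_fintype _

end List

namespace ContinuousLinearMap

variable {𝕜 E ι : Type*} [RCLike 𝕜] [NormedAddCommGroup E] [InnerProductSpace 𝕜 E]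
  [CompleteSpace E] [Fintype ι]

theorem sum_norm_sq_star_apply_le (T : ι → E →L[𝕜] E) (v : E) :
    ∑ i, ‖star (T i) v‖ ^ 2 ≤ ‖∑ i, T i * star (T i)‖ * ‖v‖ ^ 2 := by
  have hsq : ∀ i, ‖star (T i) v‖ ^ 2 = RCLike.re (inner 𝕜 ((T i * star (T i)) v) v) := by
    intro i
    rw [apply_norm_sq_eq_inner_adjoint_left, ← star_eq_adjoint, star_star]
    rfl
  calc ∑ i, ‖star (T i) v‖ ^ 2 = RCLike.re (inner 𝕜 ((∑ i, T i * star (T i)) v) v) := by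
        simp only [hsq, _root_.sum_apply, sum_inner, map_sum]
    _ ≤ ‖(∑ i, T i * star (T i)) v‖ * ‖v‖ := re_inner_le_norm _ _
    _ ≤ ‖∑ i, T i * star (T i)‖ * ‖v‖ ^ 2 := by
        rw [sq, ← mul_assoc]
        exact mul_le_mul_of_nonneg_right (le_opNorm _ _) (norm_nonneg _)

theorem sum_norm_sq_star_prod_apply_le (T : ι → E →L[𝕜] E) (k : ℕ) (v : E) :
    ∑ g : Fin k → ι, ‖star ((List.ofFn g).map T).prod v‖ ^ 2
      ≤ ‖∑ i, T i * star (T i)‖ ^ k * ‖v‖ ^ 2 := by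
  induction k generalizing v with
  | zero => simp
  | succ k ih =>
    rw [List.sum_ofFn_succ fun w => ‖star (w.map T).prod v‖ ^ 2]
    simp only [List.map_cons, List.prod_cons, star_mul]
    calc ∑ i, ∑ g : Fin k → ι, ‖star ((List.ofFn g).map T).prod (star (T i) v)‖ ^ 2
        ≤ ∑ i, ‖∑ i, T i * star (T i)‖ ^ k * ‖star (T i) v‖ ^ 2 :=
          Finset.sum_le_sum fun i _ => ih _
      _ ≤ ‖∑ i, T i * star (T i)‖ ^ (k + 1) * ‖v‖ ^ 2 := by
          rw [← Finset.mul_sum, pow_succ, mul_assoc]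
          gcongr
          exact sum_norm_sq_star_apply_le T v

theorem summable_norm_sq_star_prod_apply {T : ι → E →L[𝕜] E}
    (hT : ‖∑ i, T i * star (T i)‖ < 1) (v : E) :
    Summable fun w : List ι => ‖star (w.map T).prod v‖ ^ 2 :=
  List.summable_of_sum_ofFn_le (fun _ => by positivity)
    ((summable_geometric_of_lt_one (norm_nonneg _) hT).mul_right _)
    (sum_norm_sq_star_prod_apply_le T · v)

end ContinuousLinearMap

namespace Matrix

variable {m ι : Type*} [Fintype m] [DecidableEq m] [Fintype ι]

theorem norm_apply_le_norm_conjTranspose_single {𝕜 : Type*} [RCLike 𝕜] (A : Matrix m m 𝕜)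
    (a b : m) : ‖A a b‖ ≤ ‖toEuclideanCLM (𝕜 := 𝕜) Aᴴ (EuclideanSpace.single a 1)‖ := by
  have := PiLp.norm_apply_le (toEuclideanCLM (𝕜 := 𝕜) Aᴴ (EuclideanSpace.single a 1)) b
  simpa [ofLp_toEuclideanCLM] using this

theorem summable_norm_sq_listProd_apply {𝕜 : Type*} [RCLike 𝕜] {X : ι → Matrix m m 𝕜}
    (hX : ‖∑ i, X i * (X i)ᴴ‖ < 1) (a b : m) :
    Summable fun w : List ι => ‖(w.map X).prod a b‖ ^ 2 := by
  let Φ := toEuclideanCLM (n := m) (𝕜 := 𝕜)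
  have hT : ‖∑ i, Φ (X i) * star (Φ (X i))‖ < 1 := by
    rw [cstar_norm_def] at hX
    simpa only [map_sum, map_mul, ← star_eq_conjTranspose, map_star] using hX
  refine (ContinuousLinearMap.summable_norm_sq_star_prod_apply hT
    (EuclideanSpace.single a 1)).of_nonneg_of_le (fun _ => by positivity) fun w => ?_
  have hprod : star (w.map fun i => Φ (X i)).prod = Φ (w.map X).prodᴴ := by
    rw [← star_eq_conjTranspose, map_star, map_list_prod, List.map_map]; rfl
  rw [hprod]
  gcongr
  exact norm_apply_le_norm_conjTranspose_single _ a b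

end Matrix

section ConjKronecker

variable {m ι : Type*} [Fintype m] [DecidableEq m]

theorem conjM_listProd (w : List (Matrix m m ℂ)) : conjM w.prod = (w.map conjM).prod :=
  map_list_prod (starRingEnd ℂ).mapMatrix w

theorem conjM_listProd_kronecker (X : ι → Matrix m m ℂ) (w : List ι) :
    conjM (w.map X).prod ⊗ₖ (w.map X).prod = (w.map fun i => conjM (X i) ⊗ₖ X i).prod := by
  rw [conjM_listProd, List.map_map]
  induction w with
  | nil => exact one_kronecker_one
  | cons i w ih => simp only [List.map_cons, List.prod_cons, mul_kronecker_mul, ih]; rfl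

theorem summable_conjM_kronecker_listProd [Fintype ι] {X : ι → Matrix m m ℂ}
    (hX : ‖∑ i, X i * (X i)ᴴ‖ < 1) :
    Summable fun w : List ι => conjM (w.map X).prod ⊗ₖ (w.map X).prod := by
  refine Pi.summable.2 fun p => Pi.summable.2 fun q => ?_
  refine Summable.of_norm_bounded (((summable_norm_sq_listProd_apply hX p.1 q.1).add
    (summable_norm_sq_listProd_apply hX p.2 q.2)).div_const 2) fun w => ?_
  simp only [kroneckerMap_apply, conjM, map_apply, norm_mul, RCLike.norm_conj]
  nlinarith [sq_nonneg (‖(w.map X).prod p.1 q.1‖ - ‖(w.map X).prod p.2 q.2‖)]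

end ConjKronecker

theorem one_kronecker_mul_choiM_mul_conjTranspose {n : ℕ} (A : Mat n) :
    ((1 : Mat n) ⊗ₖ A) * choiM n * ((1 : Mat n) ⊗ₖ A)ᴴ = psi n (conjM A ⊗ₖ A) := by
  ext ⟨p1, p2⟩ ⟨q1, q2⟩
  simp [choiM, psi, conjM, mul_apply, kroneckerMap_apply, one_apply, conjTranspose_apply,
    Fintype.sum_prod_type, single, Matrix.sum_apply, Finset.sum_ite_eq, Finset.sum_ite_eq',
    ite_and, mul_comm, apply_ite (starRingEnd ℂ)]

theorem HasSum.psi {n : ℕ} {β : Type*} {F : β → Matrix (Fin n × Fin n) (Fin n × Fin n) ℂ}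
    {L : Matrix (Fin n × Fin n) (Fin n × Fin n) ℂ} (h : HasSum F L) :
    HasSum (fun b => psi n (F b)) (psi n L) :=
  Pi.hasSum.2 fun p => Pi.hasSum.2 fun q => Pi.hasSum.1 (Pi.hasSum.1 h (q.2, p.2)) (q.1, p.1)

/-- For a strict row contraction `X`, the family
`w ↦ (I_n ⊗ X^w)·𝔠_n·(I_n ⊗ X^w)*` indexed by words `w` in the free monoid on `{1,…,d}`
is summable, with sum the elementary Pick matrix `P_X`. -/
theorem hasSum_choi_conjugates_pick {n d : ℕ} (X : Fin d → Mat n)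
    (hX : StrictRowContraction X) :
    HasSum (fun w : List (Fin d) =>
        ((1 : Mat n) ⊗ₖ wordProd X w) * choiM n * ((1 : Mat n) ⊗ₖ wordProd X w)ᴴ)
      (pick X) := by
  set S := ∑ i, conjM (X i) ⊗ₖ X i with hS
  obtain ⟨L, hL⟩ := summable_conjM_kronecker_listProd hX
  have hpow : HasSum (S ^ ·) L := by
    simpa only [conjM_listProd_kronecker, List.sum_prod_map_ofFn_eq_pow] using hL.sum_ofFn
  have hinv : (1 - S)⁻¹ = L := by
    rw [inv_eq_right_inv hpow.summable.one_sub_mul_tsum_pow, hpow.tsum_eq]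
  simpa only [one_kronecker_mul_choiM_mul_conjTranspose, wordProd, pick, ← hS, hinv] using hL.psi
end
end

section
/- Let X = (X₁,…,X_d) be a strict row contraction of n×n complex matrices, let s,t ≥ 1, and let Y ∈ M_{s×t}(M_n(ℂ)) be an s×t block matrix with n×n blocks, viewed as an ns×nt matrix. Define Φ : M_n(ℂ) → M_{ns}(ℂ) by Φ(H) = (Σ_w X^w H X^{w*}) ⊗ I_s − Y·((Σ_w X^w H X^{w*}) ⊗ I_t)·Y*, the sums being over all words w in the free monoid on {1,…,d} (these series are summable). Then the Choi matrix of Φ satisfies Σ_{i,j=1}^n E_{ij} ⊗ Φ(E_{ij}) = P_X ⊗ I_s − (I_n ⊗ Y)·(P_X ⊗ I_t)·(I_n ⊗ Y*). -/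
/-!
Common definitions: the ψ-involution, `vec`, the elementary Pick matrix, the Choi matrix,
Kronecker-product helpers with right-associated index types, the boomerang matrices, the
commutation matrix, and the Moore–Penrose predicate.
-/

open Matrix Filter
open scoped Kronecker Matrix.Norms.L2Operator ComplexOrder

noncomputable section

/-!
The Choi matrix `Σ E_{ij} ⊗ Φ(E_{ij})` is linear in `Φ`, turns `H ↦ A Φ(H) B` into
`(I ⊗ A) · choi Φ · (I ⊗ B)` and `H ↦ Φ(H) ⊗ C` into `choi Φ ⊗ C`, so the claim reduces to
`P_X = choi S`. Entrywise, `ψ(choi S) = Σ_w conj(X^w) ⊗ X^w = Σ_w M^w` for the words in the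
letters `M_i = conj(X_i) ⊗ X_i`, and such a word series inverts `1 - Σ_i M_i`: splitting off
the empty word gives `(Σ_i M_i) · T = T - 1`. Since `ψ` is an involution, `P_X = choi S`.
-/

theorem one_sub_sum_mul_eq_one_of_hasSum_words {R ι : Type*} [Ring R] [TopologicalSpace R]
    [IsTopologicalRing R] [T3Space R] [Fintype ι] (a : ι → R) {T : R}
    (h : HasSum (fun w : List ι => (w.map a).prod) T) : (1 - ∑ i, a i) * T = 1 := by
  classical
  set f : List ι → R := fun w => (w.map a).prod
  have h_nonempty : HasSum (fun p : List ι × ι => f (p.2 :: p.1)) (T - 1) := by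
    have h_cons : Function.Injective fun p : List ι × ι => p.2 :: p.1 := fun p q hpq => by
      obtain ⟨h₂, h₁⟩ := List.cons_eq_cons.mp hpq
      exact Prod.ext h₁ h₂
    have h_update : HasSum (Function.update f [] 0) (T - 1) := by
      simpa [f, sub_eq_neg_add] using h.update [] 0
    have h_off_range : ∀ w, w ∉ Set.range (fun p : List ι × ι => p.2 :: p.1) →
        Function.update f [] 0 w = 0 := by
      rintro (_ | ⟨i, w⟩) hw
      · simp
      · exact absurd ⟨(w, i), rfl⟩ hw
    exact ((h_cons.hasSum_iff h_off_range).mpr h_update).congr_fun fun p => by simp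
  have h_fiber : HasSum (fun w => ∑ i, f (i :: w)) (T - 1) :=
    h_nonempty.prod_fiberwise fun w => hasSum_fintype _
  have h_left : HasSum (fun w => (∑ i, a i) * f w) ((∑ i, a i) * T) := h.mul_left _
  have h_shift : (∑ i, a i) * T = T - 1 := by
    refine h_left.unique (h_fiber.congr_fun fun w => ?_)
    simp [f, Finset.sum_mul]
  rw [sub_mul, one_mul, h_shift, sub_sub_cancel]

section Choi

variable {m p q : Type*} [Fintype m] [DecidableEq m]

def choiMatrix (Φ : Matrix m m ℂ → Matrix p q ℂ) : Matrix (m × p) (m × q) ℂ :=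
  ∑ i, ∑ j, single i j (1 : ℂ) ⊗ₖ Φ (single i j 1)

@[simp]
theorem choiMatrix_apply (Φ : Matrix m m ℂ → Matrix p q ℂ) (i j : m) (a : p) (b : q) :
    choiMatrix Φ (i, a) (j, b) = Φ (single i j 1) a b := by
  simp [choiMatrix, Matrix.sum_apply, single, ite_and, Finset.sum_ite_eq']

theorem choiMatrix_sub (Φ Ψ : Matrix m m ℂ → Matrix p q ℂ) :
    choiMatrix (fun H => Φ H - Ψ H) = choiMatrix Φ - choiMatrix Ψ := by
  ext ⟨i, a⟩ ⟨j, b⟩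
  simp

theorem choiMatrix_mul_mul {p' q' : Type*} [Fintype p] [Fintype q] [DecidableEq p']
    [DecidableEq q'] (A : Matrix p' p ℂ) (Φ : Matrix m m ℂ → Matrix p q ℂ) (B : Matrix q q' ℂ) :
    choiMatrix (fun H => A * Φ H * B) =
      ((1 : Matrix m m ℂ) ⊗ₖ A) * choiMatrix Φ * ((1 : Matrix m m ℂ) ⊗ₖ B) := by
  simp only [choiMatrix, Matrix.mul_sum, Matrix.sum_mul]
  refine Finset.sum_congr rfl fun i _ => Finset.sum_congr rfl fun j _ => ?_
  rw [← mul_kronecker_mul, ← mul_kronecker_mul, one_mul, mul_one]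

theorem choiMatrix_kronecker {p' q' : Type*} (Φ : Matrix m m ℂ → Matrix p q ℂ)
    (C : Matrix p' q' ℂ) :
    choiMatrix (fun H => Φ H ⊗ₖ C) = krA (choiMatrix Φ) C := by
  ext ⟨i, a, c⟩ ⟨j, b, d⟩
  simp [krA]

end Choi

theorem psi_psi (n : ℕ) (U : Matrix (Fin n × Fin n) (Fin n × Fin n) ℂ) :
    psi n (psi n U) = U :=
  rfl

theorem conjM_kronecker_wordProd {n : ℕ} {ι : Type*} (X : ι → Mat n) (w : List ι) :
    conjM (wordProd X w) ⊗ₖ wordProd X w = (w.map fun i => conjM (X i) ⊗ₖ X i).prod := by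
  induction w with
  | nil => simp [wordProd, conjM]
  | cons i w ih =>
    rw [List.map_cons, List.prod_cons, ← ih]
    simp only [wordProd, conjM, List.map_cons, List.prod_cons, Matrix.map_mul, mul_kronecker_mul]

theorem mul_single_mul_conjTranspose_apply {m k : Type*} [Fintype k] [DecidableEq k]
    (A : Matrix m k ℂ) (i j : k) (a b : m) :
    (A * single i j (1 : ℂ) * Aᴴ) a b = A a i * starRingEnd ℂ (A b j) := by
  simp [Matrix.mul_apply, single, ite_and]

theorem hasSum_conjM_kronecker_wordProd {n : ℕ} {ι : Type*} (X : ι → Mat n) (S : Mat n → Mat n)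
    (hS : ∀ H : Mat n, HasSum (fun w : List ι => wordProd X w * H * (wordProd X w)ᴴ) (S H)) :
    HasSum (fun w => conjM (wordProd X w) ⊗ₖ wordProd X w) (psi n (choiMatrix S)) := by
  refine Pi.hasSum.mpr fun x => Pi.hasSum.mpr fun y => ?_
  convert Pi.hasSum.mp (Pi.hasSum.mp (hS (single y.2 y.1 1)) x.2) x.1 using 1
  · ext w
    simp [conjM, mul_single_mul_conjTranspose_apply, mul_comm]
  · simp [psi]

theorem pick_eq_choiMatrix {n : ℕ} {ι : Type*} [Fintype ι] (X : ι → Mat n) (S : Mat n → Mat n)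
    (hS : ∀ H : Mat n, HasSum (fun w : List ι => wordProd X w * H * (wordProd X w)ᴴ) (S H)) :
    pick X = choiMatrix S := by
  have h_words := hasSum_conjM_kronecker_wordProd X S hS
  simp_rw [conjM_kronecker_wordProd] at h_words
  rw [pick, Matrix.inv_eq_right_inv (one_sub_sum_mul_eq_one_of_hasSum_words _ h_words), psi_psi]

theorem choi_matrix_of_pick_map_general {n d s t : ℕ} (X : Fin d → Mat n)
    (Y : Matrix (Fin n × Fin s) (Fin n × Fin t) ℂ)
    (S : Mat n → Mat n)
    (hS : ∀ H : Mat n,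
      HasSum (fun w : List (Fin d) => wordProd X w * H * (wordProd X w)ᴴ) (S H))
    (Φ : Mat n → Matrix (Fin n × Fin s) (Fin n × Fin s) ℂ)
    (hΦ : ∀ H : Mat n,
      Φ H = (S H) ⊗ₖ (1 : Matrix (Fin s) (Fin s) ℂ) -
        Y * ((S H) ⊗ₖ (1 : Matrix (Fin t) (Fin t) ℂ)) * Yᴴ) :
    (∑ i : Fin n, ∑ j : Fin n, single i j (1 : ℂ) ⊗ₖ Φ (single i j (1 : ℂ))) =
      krA (pick X) (1 : Matrix (Fin s) (Fin s) ℂ) -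
        ((1 : Mat n) ⊗ₖ Y) * krA (pick X) (1 : Matrix (Fin t) (Fin t) ℂ) * ((1 : Mat n) ⊗ₖ Y)ᴴ := by
  calc choiMatrix Φ
      = choiMatrix (fun H => S H ⊗ₖ (1 : Matrix (Fin s) (Fin s) ℂ)) -
          choiMatrix (fun H => Y * (S H ⊗ₖ (1 : Matrix (Fin t) (Fin t) ℂ)) * Yᴴ) := by
        rw [← choiMatrix_sub, funext hΦ]
    _ = _ := by
        rw [choiMatrix_mul_mul, choiMatrix_kronecker, choiMatrix_kronecker,
          pick_eq_choiMatrix X S hS, conjTranspose_kronecker, conjTranspose_one]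

/-- Let `X` be a strict row contraction, `Y` an `s×t` block matrix with
`n×n` blocks (`Y ((a,i),(b,j)) = (Y_{ij}) a b`, i.e. `Y = Σ_{ij} Y_{ij} ⊗ E_{ij}` viewed as
an `ns×nt` matrix), and let `S H = Σ_w X^w H X^{w*}` (the series is summable; here `S` is any
function with that property).  Then the Choi matrix of
`Φ(H) = (S H) ⊗ I_s − Y·((S H) ⊗ I_t)·Y*` is
`P_X ⊗ I_s − (I_n ⊗ Y)·(P_X ⊗ I_t)·(I_n ⊗ Y*)`. -/
theorem choi_matrix_of_pick_map {n d s t : ℕ} (X : Fin d → Mat n)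
    (hX : StrictRowContraction X)
    (Y : Matrix (Fin n × Fin s) (Fin n × Fin t) ℂ)
    (S : Mat n → Mat n)
    (hS : ∀ H : Mat n,
      HasSum (fun w : List (Fin d) => wordProd X w * H * (wordProd X w)ᴴ) (S H))
    (Φ : Mat n → Matrix (Fin n × Fin s) (Fin n × Fin s) ℂ)
    (hΦ : ∀ H : Mat n,
      Φ H = (S H) ⊗ₖ (1 : Matrix (Fin s) (Fin s) ℂ) -
        Y * ((S H) ⊗ₖ (1 : Matrix (Fin t) (Fin t) ℂ)) * Yᴴ) :
    (∑ i : Fin n, ∑ j : Fin n, single i j (1 : ℂ) ⊗ₖ Φ (single i j (1 : ℂ))) =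
      krA (pick X) (1 : Matrix (Fin s) (Fin s) ℂ) -
        ((1 : Mat n) ⊗ₖ Y) * krA (pick X) (1 : Matrix (Fin t) (Fin t) ℂ) * ((1 : Mat n) ⊗ₖ Y)ᴴ :=
  choi_matrix_of_pick_map_general X Y S hS Φ hΦ
end
end

section
/- Let X = (X₁,…,X_d) be a strict row contraction of n×n complex matrices and let Y ∈ M_{s×t}(M_n(ℂ)) be an s×t block matrix each of whose n×n blocks lies in alg_X. Then P_X ⊗ I_s − (I_n ⊗ Y)·(P_X ⊗ I_t)·(I_n ⊗ Y*) is positive semidefinite if and only if ‖(P_X^{†/2} ⊗ I_s)·(I_n ⊗ Y)·(P_X^{1/2} ⊗ I_t)‖ ≤ 1 in operator norm. -/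
/-!
Common definitions: the ψ-involution, `vec`, the elementary Pick matrix, the Choi matrix,
Kronecker-product helpers with right-associated index types, the boomerang matrices, the
commutation matrix, and the Moore–Penrose predicate.
-/

open Matrix Filter
open scoped Kronecker Matrix.Norms.L2Operator ComplexOrder

noncomputable section

/-- The positive semidefinite square root of a positive semidefinite matrix (the definition
`Matrix.PosSemidef.sqrt` of the older Mathlib, removed since). -/
def Matrix.PosSemidef.sqrt {n 𝕜 : Type*} [Fintype n] [RCLike 𝕜] [DecidableEq n]
    {A : Matrix n n 𝕜} (hA : A.PosSemidef) : Matrix n n 𝕜 :=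
  hA.1.eigenvectorUnitary.1 * diagonal ((↑) ∘ (√·) ∘ hA.1.eigenvalues) *
    (star hA.1.eigenvectorUnitary : Matrix n n 𝕜)


/-!
Write `R = P_X^{1/2}`, `B = R^†`, `N = I_n ⊗ Y` and `C = (B ⊗ I_s) N (R ⊗ I_t)`. Conjugating
`P_X ⊗ I_s − N (P_X ⊗ I_t) N*` by `B ⊗ I_s` gives `BR ⊗ I_s − C C*`, where `BR` is a projection;
conversely, conjugating `1 − C C*` by `R ⊗ I_s` gives the first matrix back as soon as
`(RB ⊗ I_s) N (R ⊗ I_t) = N (R ⊗ I_t)`, i.e. as soon as every block `I_n ⊗ Y_{αβ}` maps the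
range of `P_X` into itself. Since the blocks lie in `alg_X`, it suffices to check this for the
generators `I_n ⊗ Xᵢ`, and there it follows from the fixed-point identity
`P_X = vec(I) vec(I)* + Σᵢ (I_n ⊗ Xᵢ) P_X (I_n ⊗ Xᵢ)*`: all summands are positive semidefinite,
so whatever annihilates `P_X` annihilates each `(I_n ⊗ Xᵢ) P_X (I_n ⊗ Xᵢ)*`, hence `ker P_X`
is invariant under every `(I_n ⊗ Xᵢ)*`.
-/

open scoped MatrixOrder

namespace Matrix.PosSemidef

variable {n 𝕜 : Type*} [Fintype n] [RCLike 𝕜] [DecidableEq n] {A : Matrix n n 𝕜}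

lemma isHermitian_sqrt (hA : A.PosSemidef) : hA.sqrt.IsHermitian := by
  rw [Matrix.PosSemidef.sqrt, star_eq_conjTranspose]
  exact isHermitian_mul_mul_conjTranspose _ <|
    isHermitian_diagonal_of_self_adjoint _ <| funext fun i => by simp

lemma sqrt_mul_self (hA : A.PosSemidef) : hA.sqrt * hA.sqrt = A := by
  set U : Matrix n n 𝕜 := (hA.1.eigenvectorUnitary : Matrix n n 𝕜)
  have hU : star U * U = 1 := Unitary.coe_star_mul_self _
  have hD : diagonal (((↑) ∘ (√·) ∘ hA.1.eigenvalues : n → 𝕜)) *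
      diagonal (((↑) ∘ (√·) ∘ hA.1.eigenvalues : n → 𝕜)) =
        diagonal (RCLike.ofReal ∘ hA.1.eigenvalues) := by
    rw [diagonal_mul_diagonal]
    congr 1
    funext i
    simp [← RCLike.ofReal_mul, Real.mul_self_sqrt (hA.eigenvalues_nonneg i)]
  conv_rhs => rw [hA.1.spectral_theorem, Unitary.conjStarAlgAut_apply]
  simp only [Matrix.PosSemidef.sqrt, Matrix.mul_assoc]
  rw [← Matrix.mul_assoc (star U) U, hU, Matrix.one_mul, ← Matrix.mul_assoc _ _ (star U), hD]

lemma mul_eq_zero_of_mul_mul_conjTranspose_eq_zero {m : Type*} [Fintype m] (hA : A.PosSemidef)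
    {M : Matrix m n 𝕜} (h : M * A * Mᴴ = 0) : M * A = 0 := by
  have hA' : A = hA.sqrt * hA.sqrtᴴ := by rw [hA.isHermitian_sqrt.eq, hA.sqrt_mul_self]
  rw [hA', mul_self_mul_conjTranspose_eq_zero, ← self_mul_conjTranspose_eq_zero,
    conjTranspose_mul, ← Matrix.mul_assoc, Matrix.mul_assoc M, ← hA', h]

lemma mul_mul_eq_zero_of_eq_add_sum {k ι : Type*} [Fintype k] [Fintype ι] {W : Matrix n n 𝕜}
    (hA : A.PosSemidef) (hW : W.PosSemidef) (T : ι → Matrix n n 𝕜)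
    (hAW : A = W + ∑ i, T i * A * (T i)ᴴ) {L : Matrix k n 𝕜} (hL : L * A = 0) (i : ι) :
    L * T i * A = 0 := by
  have hsplit : 0 = L * W * Lᴴ + ∑ j, (L * T j) * A * (L * T j)ᴴ :=
    calc (0 : Matrix k k 𝕜) = L * A * Lᴴ := by rw [hL, Matrix.zero_mul]
      _ = _ := by
        conv_lhs => rw [hAW]
        simp only [Matrix.mul_add, Matrix.add_mul, Matrix.mul_sum, Matrix.sum_mul,
          conjTranspose_mul, Matrix.mul_assoc]
  have hterm (j : ι) : 0 ≤ (L * T j) * A * (L * T j)ᴴ := (hA.mul_mul_conjTranspose_same _).nonneg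
  have hsum := ((add_eq_zero_iff_of_nonneg (hW.mul_mul_conjTranspose_same L).nonneg
    (Finset.sum_nonneg fun j _ => hterm j)).mp hsplit.symm).2
  exact hA.mul_eq_zero_of_mul_mul_conjTranspose_eq_zero <|
    (Finset.sum_eq_zero_iff_of_nonneg fun j _ => hterm j).mp hsum i (Finset.mem_univ i)

end Matrix.PosSemidef

lemma posSemidef_one_sub_mul_conjTranspose_iff_norm_le_one {m k : Type*} [Fintype m] [Fintype k]
    [DecidableEq m] [DecidableEq k] (C : Matrix m k ℂ) :
    (1 - C * Cᴴ).PosSemidef ↔ ‖C‖ ≤ 1 := by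
  have hnn : 0 ≤ C * Cᴴ := nonneg_iff_posSemidef.mpr (posSemidef_self_mul_conjTranspose C)
  have hsq : ‖C * Cᴴ‖ = ‖C‖ * ‖C‖ := by
    simpa [l2_opNorm_conjTranspose] using l2_opNorm_conjTranspose_mul_self Cᴴ
  rw [← le_iff, ← CStarAlgebra.norm_le_one_iff_of_nonneg _ hnn, hsq, ← sq,
    sq_le_one_iff₀ (norm_nonneg C)]

namespace IsMoorePenroseInv

variable {m k : Type*} [Fintype m] [Fintype k] {A : Matrix m k ℂ} {B : Matrix k m ℂ}

lemma isStarProjection_mul_inv (h : IsMoorePenroseInv A B) : IsStarProjection (A * B) :=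
  ⟨by rw [IsIdempotentElem, ← Matrix.mul_assoc, h.mul_inv_mul], h.hermitian_mul_inv⟩

lemma isStarProjection_inv_mul (h : IsMoorePenroseInv A B) : IsStarProjection (B * A) :=
  ⟨by rw [IsIdempotentElem, ← Matrix.mul_assoc, h.inv_mul_inv], h.hermitian_inv_mul⟩

end IsMoorePenroseInv

lemma IsMoorePenroseInv.self_mul_mul_inv {m : Type*} [Fintype m] {A B : Matrix m m ℂ}
    (hA : A.IsHermitian) (h : IsMoorePenroseInv A B) : A * (A * B) = A :=
  calc A * (A * B) = Aᴴ * (A * B)ᴴ := by rw [hA.eq, h.hermitian_mul_inv]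
    _ = A := by rw [← conjTranspose_mul, h.mul_inv_mul, hA.eq]

lemma isMoorePenroseInv_one {m : Type*} [Fintype m] [DecidableEq m] :
    IsMoorePenroseInv (1 : Matrix m m ℂ) 1 :=
  ⟨by simp, by simp, by simp, by simp⟩

/-- A form of Douglas' lemma; `hN` says that the range of `N A'` lies in that of `A`. -/
theorem posSemidef_mul_self_sub_iff_norm_le_one {m k : Type*} [Fintype m] [Fintype k]
    [DecidableEq m] [DecidableEq k] {A B : Matrix m m ℂ} {A' : Matrix k k ℂ} (N : Matrix m k ℂ)
    (hA : A.IsHermitian) (hA' : A'.IsHermitian) (hB : IsMoorePenroseInv A B)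
    (hN : A * B * N * A' = N * A') :
    (A * A - N * (A' * A') * Nᴴ).PosSemidef ↔ ‖B * N * A'‖ ≤ 1 := by
  set C := B * N * A'
  have hq := hB.isStarProjection_inv_mul
  have hCC : N * (A' * A') * Nᴴ = (N * A') * (N * A')ᴴ := by
    rw [conjTranspose_mul, hA'.eq]; simp only [Matrix.mul_assoc]
  rw [← posSemidef_one_sub_mul_conjTranspose_iff_norm_le_one, hCC]
  constructor
  · intro h
    have e : B * (A * A - (N * A') * (N * A')ᴴ) * Bᴴ = B * A - C * Cᴴ := by
      rw [Matrix.mul_sub, Matrix.sub_mul]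
      congr 1
      · calc B * (A * A) * Bᴴ = (B * A) * (B * A)ᴴ := by
              rw [conjTranspose_mul, hA.eq]; simp only [Matrix.mul_assoc]
          _ = B * A := by rw [hB.hermitian_inv_mul, hq.isIdempotentElem.eq]
      · simp only [C, conjTranspose_mul, Matrix.mul_assoc]
    have h1 := h.mul_mul_conjTranspose_same B
    rw [e] at h1
    rw [show 1 - C * Cᴴ = (1 - B * A) + (B * A - C * Cᴴ) by abel]
    exact (nonneg_iff_posSemidef.mp hq.one_sub.nonneg).add h1
  · intro h
    have hAC : A * C = N * A' := by rw [← hN]; simp only [C, Matrix.mul_assoc]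
    have e : A * (1 - C * Cᴴ) * Aᴴ = A * A - (N * A') * (N * A')ᴴ := by
      rw [Matrix.mul_sub, Matrix.sub_mul, Matrix.mul_one, hA.eq, ← hAC]
      simp only [conjTranspose_mul, hA.eq, Matrix.mul_assoc]
    simpa only [e] using h.mul_mul_conjTranspose_same A

namespace IsIdempotentElem

variable {R A : Type*} [CommSemiring R] [Semiring A] [Algebra R A] {p : A}

variable (R) in
/-- For an idempotent `p`, the elements mapping the range of `p` into itself. -/
def rangeStabilizer (hp : IsIdempotentElem p) : Subalgebra R A where
  carrier := {x | p * x * p = x * p}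
  mul_mem' {x y} hx hy := by
    change p * x * p = x * p at hx
    change p * y * p = y * p at hy
    calc p * (x * y) * p = p * x * (p * y * p) := by rw [hy]; simp only [mul_assoc]
      _ = p * x * p * (y * p) := by simp only [mul_assoc]
      _ = x * (p * y * p) := by rw [hx]; simp only [mul_assoc]
      _ = x * y * p := by rw [hy, mul_assoc]
  add_mem' {x y} hx hy := by
    change p * x * p = x * p at hx
    change p * y * p = y * p at hy
    change p * (x + y) * p = (x + y) * p
    rw [mul_add, add_mul, add_mul, hx, hy]
  algebraMap_mem' r := by
    change p * algebraMap R A r * p = algebraMap R A r * p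
    rw [← Algebra.commutes, mul_assoc, hp.eq]

lemma mul_mul_eq_of_mem_rangeStabilizer (hp : IsIdempotentElem p) {x y : A}
    (hx : x ∈ hp.rangeStabilizer R) (hy : p * y = y) : p * x * y = x * y :=
  calc p * x * y = p * x * p * y := by rw [mul_assoc _ p, hy]
    _ = x * y := by rw [show p * x * p = x * p from hx, mul_assoc, hy]

end IsIdempotentElem

section krA

variable {a b c a' b' c' a'' b'' c'' : Type*}

lemma krA_eq_submatrix (F : Matrix (a × b) (a' × b') ℂ) (C : Matrix c c' ℂ) :
    krA F C = (F ⊗ₖ C).submatrix (Equiv.prodAssoc a b c).symm (Equiv.prodAssoc a' b' c').symm :=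
  rfl

lemma krA_mul [Fintype a'] [Fintype b'] [Fintype c'] (F : Matrix (a × b) (a' × b') ℂ)
    (G : Matrix (a' × b') (a'' × b'') ℂ) (C : Matrix c c' ℂ) (D : Matrix c' c'' ℂ) :
    krA F C * krA G D = krA (F * G) (C * D) := by
  rw [krA_eq_submatrix, krA_eq_submatrix, krA_eq_submatrix, submatrix_mul_equiv,
    mul_kronecker_mul]

lemma krA_conjTranspose (F : Matrix (a × b) (a' × b') ℂ) (C : Matrix c c' ℂ) :
    (krA F C)ᴴ = krA Fᴴ Cᴴ := by
  rw [krA_eq_submatrix, krA_eq_submatrix, conjTranspose_submatrix, conjTranspose_kronecker]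

lemma krA_one [DecidableEq a] [DecidableEq b] [DecidableEq c] :
    krA (1 : Matrix (a × b) (a × b) ℂ) (1 : Matrix c c ℂ) = 1 := by
  rw [krA_eq_submatrix, one_kronecker_one, submatrix_one_equiv]

lemma IsMoorePenroseInv.krA [Fintype a] [Fintype b] [Fintype c] [Fintype a'] [Fintype b']
    [Fintype c'] {F : Matrix (a × b) (a' × b') ℂ} {G : Matrix (a' × b') (a × b) ℂ}
    {C : Matrix c c' ℂ} {D : Matrix c' c ℂ} (hF : IsMoorePenroseInv F G)
    (hC : IsMoorePenroseInv C D) : IsMoorePenroseInv (krA F C) (krA G D) where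
  mul_inv_mul := by rw [krA_mul, krA_mul, hF.mul_inv_mul, hC.mul_inv_mul]
  inv_mul_inv := by rw [krA_mul, krA_mul, hF.inv_mul_inv, hC.inv_mul_inv]
  hermitian_mul_inv := by
    rw [krA_mul, krA_conjTranspose, hF.hermitian_mul_inv, hC.hermitian_mul_inv]
  hermitian_inv_mul := by
    rw [krA_mul, krA_conjTranspose, hF.hermitian_inv_mul, hC.hermitian_inv_mul]

variable {e f e' f' s t : Type*} [Fintype a] [Fintype b] [Fintype c] [Fintype s] [Fintype t]
  [DecidableEq a] [DecidableEq s] [DecidableEq t]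

lemma krA_mul_one_kronecker_mul_krA_apply (F : Matrix (e × f) (a × b) ℂ)
    (Y : Matrix (b × s) (c × t) ℂ) (G : Matrix (a × c) (e' × f') ℂ)
    (p : e × f × s) (q : e' × f' × t) :
    (krA F (1 : Matrix s s ℂ) * ((1 : Matrix a a ℂ) ⊗ₖ Y) * krA G (1 : Matrix t t ℂ)) p q =
      (F * ((1 : Matrix a a ℂ) ⊗ₖ Matrix.of fun x y => Y (x, p.2.2) (y, q.2.2)) * G)
        (p.1, p.2.1) (q.1, q.2.1) := by
  obtain ⟨i, j, α⟩ := p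
  obtain ⟨k, l, β⟩ := q
  simp [krA, mul_apply, Fintype.sum_prod_type, one_apply, Finset.sum_mul]

lemma krA_mul_one_kronecker_mul_krA_eq [DecidableEq b] {F : Matrix (a × b) (a × b) ℂ}
    {Y : Matrix (b × s) (c × t) ℂ} {G : Matrix (a × c) (e' × f') ℂ}
    (h : ∀ α β, F * ((1 : Matrix a a ℂ) ⊗ₖ Matrix.of fun x y => Y (x, α) (y, β)) * G =
      ((1 : Matrix a a ℂ) ⊗ₖ Matrix.of fun x y => Y (x, α) (y, β)) * G) :
    krA F (1 : Matrix s s ℂ) * ((1 : Matrix a a ℂ) ⊗ₖ Y) * krA G (1 : Matrix t t ℂ) =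
      ((1 : Matrix a a ℂ) ⊗ₖ Y) * krA G (1 : Matrix t t ℂ) := by
  conv_rhs => rw [← Matrix.one_mul ((1 : Matrix a a ℂ) ⊗ₖ Y), ← krA_one]
  ext p q
  rw [krA_mul_one_kronecker_mul_krA_apply, krA_mul_one_kronecker_mul_krA_apply, h,
    Matrix.one_mul]

end krA

section psi

variable {n : ℕ}

lemma psi_add (U V : Matrix (Fin n × Fin n) (Fin n × Fin n) ℂ) :
    psi n (U + V) = psi n U + psi n V := rfl

lemma psi_sum {ι : Type*} (s : Finset ι) (U : ι → Matrix (Fin n × Fin n) (Fin n × Fin n) ℂ) :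
    psi n (∑ i ∈ s, U i) = ∑ i ∈ s, psi n (U i) := by
  ext
  simp [psi, Matrix.sum_apply]

lemma psi_one : psi n 1 = vecM n 1 * (vecM n 1)ᴴ := by
  ext ⟨i, j⟩ ⟨k, l⟩
  simp [psi, vecM, mul_apply, one_apply, Prod.ext_iff, ite_and]

lemma psi_conjM_kronecker_mul (A : Mat n) (U : Matrix (Fin n × Fin n) (Fin n × Fin n) ℂ) :
    psi n ((conjM A ⊗ₖ A) * U) = ((1 : Mat n) ⊗ₖ A) * psi n U * ((1 : Mat n) ⊗ₖ A)ᴴ := by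
  ext ⟨i, j⟩ ⟨k, l⟩
  simp [psi, conjM, mul_apply, Fintype.sum_prod_type, one_apply, Finset.sum_mul,
    apply_ite (starRingEnd ℂ)]
  exact Finset.sum_congr rfl fun _ _ => Finset.sum_congr rfl fun _ _ => by ring

end psi

section pick

variable {n d : ℕ} {X : Fin d → Mat n}

lemma pick_eq_zero_of_not_isUnit (hu : ¬IsUnit (1 - ∑ i, conjM (X i) ⊗ₖ X i)) : pick X = 0 := by
  rw [pick, nonsing_inv_apply_not_isUnit _ (mt (isUnit_iff_isUnit_det _).mpr hu)]
  rfl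

lemma pick_eq_add_sum (hu : IsUnit (1 - ∑ i, conjM (X i) ⊗ₖ X i)) :
    pick X = vecM n 1 * (vecM n 1)ᴴ +
      ∑ i, ((1 : Mat n) ⊗ₖ X i) * pick X * ((1 : Mat n) ⊗ₖ X i)ᴴ := by
  set S := ∑ i, conjM (X i) ⊗ₖ X i
  have hT : (1 - S)⁻¹ = 1 + S * (1 - S)⁻¹ := by
    have h := mul_nonsing_inv _ ((isUnit_iff_isUnit_det _).mp hu)
    rwa [Matrix.sub_mul, Matrix.one_mul, sub_eq_iff_eq_add] at h
  calc pick X = psi n (1 + S * (1 - S)⁻¹) := congrArg (psi n) hT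
    _ = _ := by
      simp only [psi_add, psi_one, S, Finset.sum_mul, psi_sum, psi_conjM_kronecker_mul]
      rfl

lemma pick_mul_eq_zero {k : Type*} [Fintype k] (hP : (pick X).PosSemidef)
    {L : Matrix k (Fin n × Fin n) ℂ} (hL : L * pick X = 0) (i : Fin d) :
    L * ((1 : Mat n) ⊗ₖ X i) * pick X = 0 := by
  by_cases hu : IsUnit (1 - ∑ i, conjM (X i) ⊗ₖ X i)
  · exact hP.mul_mul_eq_zero_of_eq_add_sum (posSemidef_self_mul_conjTranspose _) _
      (pick_eq_add_sum hu) hL i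
  · rw [pick_eq_zero_of_not_isUnit hu, Matrix.mul_zero]

lemma one_kronecker_mem_rangeStabilizer_of_mem_adjoin (hP : (pick X).PosSemidef)
    {B : Matrix (Fin n × Fin n) (Fin n × Fin n) ℂ} (hB : IsMoorePenroseInv hP.sqrt B)
    {a : Mat n} (ha : a ∈ Algebra.adjoin ℂ (Set.range X)) :
    (1 : Mat n) ⊗ₖ a ∈ hB.isStarProjection_mul_inv.isIdempotentElem.rangeStabilizer ℂ := by
  set R := hP.sqrt
  set π := R * B
  have hRR : R * R = pick X := hP.sqrt_mul_self
  have hπP : π * pick X = pick X := by rw [← hRR, ← Matrix.mul_assoc, hB.mul_inv_mul]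
  have hPBB : pick X * (B * B) = π := by
    rw [← hRR, Matrix.mul_assoc, ← Matrix.mul_assoc R B B, ← Matrix.mul_assoc,
      hB.self_mul_mul_inv hP.isHermitian_sqrt]
  let f : Mat n →ₐ[ℂ] Matrix (Fin n × Fin n) (Fin n × Fin n) ℂ :=
    (kroneckerAlgEquiv (Fin n) (Fin n) ℂ).toAlgHom.comp Algebra.TensorProduct.includeRight
  have hgen : Set.range X ⊆
      (hB.isStarProjection_mul_inv.isIdempotentElem.rangeStabilizer ℂ).comap f := by
    rintro _ ⟨i, rfl⟩
    set T := (1 : Mat n) ⊗ₖ X i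
    have hker : T * pick X = π * T * pick X := by
      have h := pick_mul_eq_zero hP (L := 1 - π)
        (by rw [Matrix.sub_mul, Matrix.one_mul, hπP, sub_self]) i
      rwa [Matrix.sub_mul, Matrix.sub_mul, Matrix.one_mul, sub_eq_zero] at h
    change π * f (X i) * π = f (X i) * π
    rw [show f (X i) = T by simp [f, T]]
    calc π * T * π = π * T * pick X * (B * B) := by rw [Matrix.mul_assoc _ (pick X), hPBB]
      _ = T * π := by rw [← hker, Matrix.mul_assoc, hPBB]
  simpa [f] using Algebra.adjoin_le hgen ha

end pick

theorem pick_posSemidef_iff_norm_le_one_general {n d s t : ℕ} (X : Fin d → Mat n)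
    (Y : Matrix (Fin n × Fin s) (Fin n × Fin t) ℂ)
    (hY : ∀ (i : Fin s) (j : Fin t),
      (Matrix.of fun a b => Y (a, i) (b, j)) ∈ Algebra.adjoin ℂ (Set.range X))
    (hP : (pick X).PosSemidef)
    (B : Matrix (Fin n × Fin n) (Fin n × Fin n) ℂ)
    (hB : IsMoorePenroseInv hP.sqrt B) :
    (krA (pick X) (1 : Matrix (Fin s) (Fin s) ℂ) -
        ((1 : Mat n) ⊗ₖ Y) * krA (pick X) (1 : Matrix (Fin t) (Fin t) ℂ) *
          ((1 : Mat n) ⊗ₖ Y)ᴴ).PosSemidef ↔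
      ‖krA B (1 : Matrix (Fin s) (Fin s) ℂ) * ((1 : Mat n) ⊗ₖ Y) *
          krA hP.sqrt (1 : Matrix (Fin t) (Fin t) ℂ)‖ ≤ 1 := by
  have hsq (r : ℕ) : krA (pick X) (1 : Matrix (Fin r) (Fin r) ℂ) =
      krA hP.sqrt 1 * krA hP.sqrt 1 := by
    rw [krA_mul, hP.sqrt_mul_self, Matrix.one_mul]
  have hherm (r : ℕ) : (krA hP.sqrt (1 : Matrix (Fin r) (Fin r) ℂ)).IsHermitian := by
    rw [IsHermitian, krA_conjTranspose, hP.isHermitian_sqrt.eq, conjTranspose_one]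
  rw [hsq, hsq]
  refine posSemidef_mul_self_sub_iff_norm_le_one _ (hherm s) (hherm t)
    (hB.krA isMoorePenroseInv_one) ?_
  rw [krA_mul, Matrix.mul_one]
  exact krA_mul_one_kronecker_mul_krA_eq fun α β =>
    hB.isStarProjection_mul_inv.isIdempotentElem.mul_mul_eq_of_mem_rangeStabilizer
      (one_kronecker_mem_rangeStabilizer_of_mem_adjoin hP hB (hY α β)) hB.mul_inv_mul

/-- Let `X` be a strict row contraction and `Y` an `s×t` block matrix all
of whose `n×n` blocks lie in `alg_X` (the unital subalgebra generated by `X₁,…,X_d`).  Then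
`P_X ⊗ I_s − (I_n ⊗ Y)·(P_X ⊗ I_t)·(I_n ⊗ Y*)` is positive semidefinite if and only if
`‖(P_X^{†/2} ⊗ I_s)·(I_n ⊗ Y)·(P_X^{1/2} ⊗ I_t)‖ ≤ 1` in the operator norm.
Here `hP.sqrt` is the positive semidefinite square root `P_X^{1/2}` and `B` is its
Moore–Penrose pseudoinverse `P_X^{†/2}`. -/
theorem pick_posSemidef_iff_norm_le_one {n d s t : ℕ} (X : Fin d → Mat n)
    (hX : StrictRowContraction X)
    (Y : Matrix (Fin n × Fin s) (Fin n × Fin t) ℂ)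
    (hY : ∀ (i : Fin s) (j : Fin t),
      (Matrix.of fun a b => Y (a, i) (b, j)) ∈ Algebra.adjoin ℂ (Set.range X))
    (hP : (pick X).PosSemidef)
    (B : Matrix (Fin n × Fin n) (Fin n × Fin n) ℂ)
    (hB : IsMoorePenroseInv hP.sqrt B) :
    (krA (pick X) (1 : Matrix (Fin s) (Fin s) ℂ) -
        ((1 : Mat n) ⊗ₖ Y) * krA (pick X) (1 : Matrix (Fin t) (Fin t) ℂ) *
          ((1 : Mat n) ⊗ₖ Y)ᴴ).PosSemidef ↔
      ‖krA B (1 : Matrix (Fin s) (Fin s) ℂ) * ((1 : Mat n) ⊗ₖ Y) *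
          krA hP.sqrt (1 : Matrix (Fin t) (Fin t) ℂ)‖ ≤ 1 :=
  pick_posSemidef_iff_norm_le_one_general X Y hY hP B hB
end
end

section
/- (Boomerang switch identities) Let n ≥ 1 and let B̆ ∈ M_{n³×n}(ℂ) be the boomerang matrix. Then: (1) for every C ∈ M_n(ℂ), (C ⊗ I_n ⊗ I_n)·B̆ = (I_n ⊗ I_n ⊗ Cᵀ)·B̆; and (2) for every A ∈ M_{n²}(ℂ) and C, D ∈ M_n(ℂ), B̆ᵀ·(A ⊗ (CD))·B̆ = B̆ᵀ·(((Cᵀ ⊗ I_n)·A·(Dᵀ ⊗ I_n)) ⊗ I_n)·B̆. -/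
/-!
Common definitions: the ψ-involution, `vec`, the elementary Pick matrix, the Choi matrix,
Kronecker-product helpers with right-associated index types, the boomerang matrices, the
commutation matrix, and the Moore–Penrose predicate.
-/

open Matrix Filter
open scoped Kronecker Matrix.Norms.L2Operator ComplexOrder

noncomputable section

/-!
Right multiplication by `B̆` contracts the first and third tensor legs of a matrix along their
diagonal: `(M B̆)_{p,ℓ} = Σᵢ M_{p,(i,ℓ,i)}`, and `(B̆ᵀ (A ⊗ E) B̆)_{ℓℓ'} = Σ_{i,k} A_{(i,ℓ),(k,ℓ')} E_{ik}`.
Both identities then say that a factor may be moved across such a contraction, which is the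
cyclicity `Σ C_{ai} D_{ib} = (CD)_{ab}` of matrix multiplication.
-/

lemma kronecker_one_mul_mul_kronecker_one_apply {R m m' k : Type*} [CommSemiring R]
    [Fintype m] [Fintype m'] [Fintype k] [DecidableEq k]
    (C : Matrix m m' R) (A : Matrix (m × k) (m × k) R) (D : Matrix m' m R) (i j : m') (l l' : k) :
    ((Cᵀ ⊗ₖ (1 : Matrix k k R)) * A * (Dᵀ ⊗ₖ (1 : Matrix k k R))) (i, l) (j, l') =
      ∑ a, ∑ b, C a i * A (a, l) (b, l') * D j b := by
  simp only [mul_apply, kroneckerMap_apply, transpose_apply, one_apply, Fintype.sum_prod_type,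
    mul_ite, ite_mul, mul_one, mul_zero, zero_mul, Finset.sum_ite_eq, Finset.sum_ite_eq',
    Finset.mem_univ, if_true, Finset.sum_mul]
  exact Finset.sum_comm

lemma sum_kronecker_one_mul_mul_kronecker_one_apply_diag {R m k : Type*} [CommSemiring R]
    [Fintype m] [Fintype k] [DecidableEq k]
    (C D : Matrix m m R) (A : Matrix (m × k) (m × k) R) (l l' : k) :
    ∑ j, ((Cᵀ ⊗ₖ (1 : Matrix k k R)) * A * (Dᵀ ⊗ₖ (1 : Matrix k k R))) (j, l) (j, l') =
      ∑ a, ∑ b, A (a, l) (b, l') * (C * D) a b := by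
  simp only [kronecker_one_mul_mul_kronecker_one_apply]
  simp only [mul_apply, Finset.mul_sum]
  rw [Finset.sum_comm]
  refine Finset.sum_congr rfl fun a _ => ?_
  rw [Finset.sum_comm]
  exact Finset.sum_congr rfl fun b _ => Finset.sum_congr rfl fun j _ => by ring

section Boomerang

variable {n : ℕ}

lemma mul_boom_apply {m : Type*} (M : Matrix m (Fin n × Fin n × Fin n) ℂ) (p : m) (l : Fin n) :
    (M * boom n) p l = ∑ i, M p (i, l, i) := by
  simp [mul_apply, boom, Fintype.sum_prod_type, ite_and]

lemma kr3_mul_boom_apply (A B C : Mat n) (i j k l : Fin n) :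
    (kr3 A B C * boom n) (i, j, k) l = ∑ t, A i t * B j l * C k t :=
  mul_boom_apply _ _ _

lemma transpose_boom_mul_krA_mul_boom_apply (A : Matrix (Fin n × Fin n) (Fin n × Fin n) ℂ)
    (E : Mat n) (l l' : Fin n) :
    ((boom n)ᵀ * krA A E * boom n) l l' = ∑ i, ∑ k, A (i, l) (k, l') * E i k := by
  rw [mul_boom_apply]
  simp [mul_apply, boom, krA, Fintype.sum_prod_type, ite_and]
  exact Finset.sum_comm

end Boomerang

theorem boomerang_switch_general {n : ℕ} :
    (∀ C : Mat n,
      kr3 C (1 : Mat n) (1 : Mat n) * boom n = kr3 (1 : Mat n) (1 : Mat n) Cᵀ * boom n) ∧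
    (∀ (A : Matrix (Fin n × Fin n) (Fin n × Fin n) ℂ) (C D : Mat n),
      (boom n)ᵀ * krA A (C * D) * boom n =
        (boom n)ᵀ * krA ((Cᵀ ⊗ₖ (1 : Mat n)) * A * (Dᵀ ⊗ₖ (1 : Mat n))) (1 : Mat n) * boom n) := by
  refine ⟨fun C => ?_, fun A C D => ?_⟩
  · ext ⟨i, j, k⟩ l
    simp [kr3_mul_boom_apply, one_apply, mul_comm]
  · ext l l'
    rw [transpose_boom_mul_krA_mul_boom_apply, transpose_boom_mul_krA_mul_boom_apply]
    simp only [one_apply, mul_ite, mul_one, mul_zero, Finset.sum_ite_eq, Finset.mem_univ, if_true]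
    exact (sum_kronecker_one_mul_mul_kronecker_one_apply_diag C D A l l').symm

/-- **Boomerang switch identities.** For the boomerang matrix `B̆`:
(1) `(C ⊗ I_n ⊗ I_n)·B̆ = (I_n ⊗ I_n ⊗ Cᵀ)·B̆` for all `C ∈ M_n(ℂ)`;
(2) `B̆ᵀ·(A ⊗ (CD))·B̆ = B̆ᵀ·(((Cᵀ ⊗ I_n)·A·(Dᵀ ⊗ I_n)) ⊗ I_n)·B̆` for all `A ∈ M_{n²}(ℂ)`
and `C, D ∈ M_n(ℂ)`. -/
theorem boomerang_switch {n : ℕ} (hn : 1 ≤ n) :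
    (∀ C : Mat n,
      kr3 C (1 : Mat n) (1 : Mat n) * boom n = kr3 (1 : Mat n) (1 : Mat n) Cᵀ * boom n) ∧
    (∀ (A : Matrix (Fin n × Fin n) (Fin n × Fin n) ℂ) (C D : Mat n),
      (boom n)ᵀ * krA A (C * D) * boom n =
        (boom n)ᵀ * krA ((Cᵀ ⊗ₖ (1 : Mat n)) * A * (Dᵀ ⊗ₖ (1 : Mat n))) (1 : Mat n) * boom n) :=
  boomerang_switch_general
end
end

section
/- Let n, s, t ≥ 1, A ∈ M_{n²}(ℂ), C ∈ M_n(ℂ), and Z ∈ M_{nt×ns}(ℂ). Then ((A ⊗ I_t)·(I_n ⊗ Z) ⊗ C)·B̆_s = (A ⊗ I_t ⊗ C)·B̆_t·Z, where B̆_r denotes the ampliated boomerang matrix. -/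
/-!
Common definitions: the ψ-involution, `vec`, the elementary Pick matrix, the Choi matrix,
Kronecker-product helpers with right-associated index types, the boomerang matrices, the
commutation matrix, and the Moore–Penrose predicate.
-/

open Matrix Filter
open scoped Kronecker Matrix.Norms.L2Operator ComplexOrder

noncomputable section

/-!
Entrywise, `(M ⊗ C) · B̆_r` contracts the first column index of `M` against the column index
of `C` and leaves the other two column indices `(j, a) ∈ [n] × [r]` free. Right multiplication
of `M` by `I_n ⊗ Z` acts on those free indices alone, so it commutes with the contraction and
comes out as right multiplication by `Z`.
-/

theorem boomAmp_apply (n r : ℕ) (p : Fin n × Fin n × Fin r × Fin n) (q : Fin n × Fin r) :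
    boomAmp n r p q = if p.2.2.2 = p.1 ∧ p.2.1 = q.1 ∧ p.2.2.1 = q.2 then 1 else 0 := by
  simp only [boomAmp, mul_apply, preBoom, commMat, of_apply, Fintype.sum_prod_type, ite_and,
    ite_mul, one_mul, zero_mul, Finset.sum_ite_eq, Finset.sum_ite_eq', Finset.sum_ite_irrel,
    Finset.sum_const_zero, Finset.mem_univ, if_true]

theorem krT_mul_boomAmp_apply {α β γ ε : Type*} {n r : ℕ}
    (M : Matrix (α × β × γ) (Fin n × Fin n × Fin r) ℂ) (C : Matrix ε (Fin n) ℂ)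
    (p : α × β × γ × ε) (q : Fin n × Fin r) :
    (krT M C * boomAmp n r) p q = ∑ i, M (p.1, p.2.1, p.2.2.1) (i, q) * C p.2.2.2 i := by
  simp only [mul_apply, boomAmp_apply, krT, of_apply, Fintype.sum_prod_type, ite_and, mul_ite,
    mul_one, mul_zero, Finset.sum_ite_eq', Finset.sum_ite_irrel,
    Finset.sum_const_zero, Finset.mem_univ, if_true]

theorem krT_mul_one_kronecker_mul_boomAmp {α β γ ε : Type*} {n s t : ℕ}
    (M : Matrix (α × β × γ) (Fin n × Fin n × Fin t) ℂ) (C : Matrix ε (Fin n) ℂ)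
    (Z : Matrix (Fin n × Fin t) (Fin n × Fin s) ℂ) :
    krT (M * ((1 : Mat n) ⊗ₖ Z)) C * boomAmp n s = krT M C * boomAmp n t * Z := by
  ext p q
  have hMZ : ∀ x i, (M * ((1 : Mat n) ⊗ₖ Z)) x (i, q) =
      ∑ m, M x (i, m) * Z m q := by
    intro x i
    rw [mul_apply, Fintype.sum_prod_type]
    simp only [kroneckerMap_apply, one_apply, ite_mul, one_mul, zero_mul, mul_ite, mul_zero,
      Finset.sum_ite_irrel, Finset.sum_const_zero, Finset.sum_ite_eq', Finset.mem_univ, if_true]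
  simp only [krT_mul_boomAmp_apply, hMZ, mul_apply (M := krT M C * boomAmp n t),
    Finset.sum_mul]
  rw [Finset.sum_comm]
  exact Finset.sum_congr rfl fun m _ => Finset.sum_congr rfl fun i _ => by ring

theorem ampliated_boomerang_right_general {n s t : ℕ}
    (A : Matrix (Fin n × Fin n) (Fin n × Fin n) ℂ) (C : Mat n)
    (Z : Matrix (Fin n × Fin t) (Fin n × Fin s) ℂ) :
    krT (krA A (1 : Matrix (Fin t) (Fin t) ℂ) * ((1 : Mat n) ⊗ₖ Z)) C * boomAmp n s =
      krT (krA A (1 : Matrix (Fin t) (Fin t) ℂ)) C * boomAmp n t * Z :=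
  krT_mul_one_kronecker_mul_boomAmp _ C Z

/-- For `A ∈ M_{n²}(ℂ)`, `C ∈ M_n(ℂ)` and `Z ∈ M_{nt×ns}(ℂ)`,
`((A ⊗ I_t)·(I_n ⊗ Z) ⊗ C)·B̆_s = (A ⊗ I_t ⊗ C)·B̆_t·Z`, where `B̆_r` is the ampliated
boomerang matrix. -/
theorem ampliated_boomerang_right {n s t : ℕ} (hn : 1 ≤ n) (hs : 1 ≤ s) (ht : 1 ≤ t)
    (A : Matrix (Fin n × Fin n) (Fin n × Fin n) ℂ) (C : Mat n)
    (Z : Matrix (Fin n × Fin t) (Fin n × Fin s) ℂ) :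
    krT (krA A (1 : Matrix (Fin t) (Fin t) ℂ) * ((1 : Mat n) ⊗ₖ Z)) C * boomAmp n s =
      krT (krA A (1 : Matrix (Fin t) (Fin t) ℂ)) C * boomAmp n t * Z :=
  ampliated_boomerang_right_general A C Z
end
end
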